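/- Fix m>0, 0<q<p, N≥2, λ_i = (p/q)^i, w(n) = Γ(n+m/2)/(n! Γ(m/2)), and for K∈ℕ let μ^K be the probability measure on A_K = {η∈ℕ^N : ∑_{i=1}^N η_i = K} with μ^K(η) proportional to ∏_{i=1}^N w(η_i) λ_i^{η_i}. Let (η^K)_{K∈ℕ} be any sequence of ℕ^N-valued random variables on a common probability space such that η^K has law μ^K for each K. Then η^K_N / K → 1 almost surely as K→∞ (strong law of large numbers for the condensate site). -/

import Mathlib

/-!
With `r = p / q > 1`, the weight of `η ∈ A_K` is `∏ w(η_i)` times `r ^ ∑ i η_i`, and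
`∑ i η_i ≤ N K - (K - η_N)`. Since `w` grows at most polynomially and decays at most like
`1 / n`, comparing with the configuration carrying all `K` particles at site `N` gives
`μ^K(η) ≤ poly(K) r^{-(K - η_N)}`. Summing over the at most `(K + 1)^N` configurations,
`μ^K(K - η_N ≥ ε K) ≤ poly(K) r^{-ε K}` is summable in `K`, and Borel–Cantelli gives
`η^K_N / K → 1` almost surely.
-/

open Filter Topology MeasureTheory

/-- The weights `w(n) = Γ(n+m/2)/(n! Γ(m/2))`. -/
noncomputable def asipW (m : ℝ) (n : ℕ) : ℝ :=
  Real.Gamma (n + m / 2) / (n.factorial * Real.Gamma (m / 2))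

/-- `λ_i = (p/q)^i` for site `i ∈ {1,…,N}` (here `i : Fin N` represents site `i+1`). -/
noncomputable def asipLam (p q : ℝ) {N : ℕ} (i : Fin N) : ℝ := (p / q) ^ ((i : ℕ) + 1)

/-- The canonical weight `∏_{i=1}^N w(η_i) λ_i^{η_i}` of a configuration `η`. -/
noncomputable def asipWeight (m p q : ℝ) {N : ℕ} (η : Fin N → ℕ) : ℝ :=
  ∏ i, asipW m (η i) * asipLam p q i ^ (η i)

/-- The canonical partition function `Z(K) = ∑_{η ∈ A_K} ∏_i w(η_i) λ_i^{η_i}`. -/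
noncomputable def asipZ (m p q : ℝ) (N K : ℕ) : ℝ :=
  ∑' η : {η : Fin N → ℕ // ∑ i, η i = K}, asipWeight m p q η.1

open Finset

section Weights

variable {m : ℝ}

lemma asipW_zero (hm : 0 < m) : asipW m 0 = 1 := by
  have := Real.Gamma_pos_of_pos (half_pos hm)
  simp [asipW, this.ne']

lemma asipW_pos (hm : 0 < m) (n : ℕ) : 0 < asipW m n := by
  unfold asipW
  have := Real.Gamma_pos_of_pos (half_pos hm)
  have := Real.Gamma_pos_of_pos (by positivity : (0 : ℝ) < n + m / 2)
  positivity

lemma asipW_succ (hm : 0 < m) (n : ℕ) :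
    asipW m (n + 1) = asipW m n * ((n + m / 2) / (n + 1)) := by
  have hΓ := Real.Gamma_pos_of_pos (half_pos hm)
  have hpos : (0 : ℝ) < n + m / 2 := by positivity
  have hshift : ((n + 1 : ℕ) : ℝ) + m / 2 = (n + m / 2) + 1 := by push_cast; ring
  rw [asipW, asipW, hshift, Real.Gamma_add_one hpos.ne', Nat.factorial_succ]
  field_simp
  push_cast
  ring

lemma asipW_le_pow (hm : 0 < m) (n : ℕ) : asipW m n ≤ ((n : ℝ) + 1) ^ ⌈m / 2⌉₊ := by
  set c := ⌈m / 2⌉₊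
  induction n with
  | zero => simp [asipW_zero hm]
  | succ n ih =>
    have hn : (0 : ℝ) < n + 1 := by positivity
    have hratio : (n + m / 2) / (n + 1) ≤ ((n + 2) / (n + 1) : ℝ) ^ c := calc
      (n + m / 2) / (n + 1) ≤ 1 + c * (n + 1 : ℝ)⁻¹ := by
        rw [div_le_iff₀ hn, add_mul, mul_assoc, inv_mul_cancel₀ hn.ne']
        linarith [Nat.le_ceil (m / 2)]
      _ ≤ (1 + (n + 1 : ℝ)⁻¹) ^ c := one_add_mul_le_pow (by linarith [inv_pos.2 hn]) c
      _ = ((n + 2) / (n + 1) : ℝ) ^ c := by congr 1; field_simp; ring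
    calc asipW m (n + 1) = asipW m n * ((n + m / 2) / (n + 1)) := asipW_succ hm n
      _ ≤ ((n : ℝ) + 1) ^ c * ((n + 2) / (n + 1) : ℝ) ^ c :=
        mul_le_mul ih hratio (by positivity) (by positivity)
      _ = (((n + 1 : ℕ) : ℝ) + 1) ^ c := by
        rw [← mul_pow]; push_cast; congr 1; field_simp; ring

lemma min_div_le_asipW (hm : 0 < m) (n : ℕ) : min (m / 2) 1 / (n + 1) ≤ asipW m n := by
  set c₀ := min (m / 2) 1
  have hc₀ : 0 ≤ c₀ := le_min (half_pos hm).le zero_le_one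
  -- For `m < 1` the bound is not inductive from `n = 0` (`asipW m 1 = m / 2`); start at `n = 1`.
  have hsucc : ∀ n : ℕ, c₀ / (n + 1) ≤ asipW m (n + 1) := by
    intro n
    induction n with
    | zero => simp [asipW_succ hm, asipW_zero hm, c₀]
    | succ n ih =>
      have hn : (0 : ℝ) < n + 2 := by positivity
      have hratio : ((n : ℝ) + 1) / (n + 2) ≤ (n + 1 + m / 2) / (n + 1 + 1) := by
        rw [add_assoc (n : ℝ) 1 1, one_add_one_eq_two]
        exact div_le_div_of_nonneg_right (by linarith) hn.le
      calc c₀ / ((n + 1 : ℕ) + 1) = c₀ / (n + 1) * ((n + 1) / (n + 2)) := by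
            push_cast; field_simp; ring
        _ ≤ asipW m (n + 1) * ((n + 1 + m / 2) / (n + 1 + 1)) :=
            mul_le_mul ih hratio (by positivity) (asipW_pos hm _).le
        _ = asipW m (n + 1 + 1) := by rw [asipW_succ hm (n + 1)]; push_cast; ring_nf
  cases n with
  | zero => simp [asipW_zero hm, c₀]
  | succ n =>
    calc c₀ / ((n + 1 : ℕ) + 1) ≤ c₀ / (n + 1) := by
          gcongr
          linarith
      _ ≤ asipW m (n + 1) := hsucc n

end Weights

lemma apply_le_of_sum_eq {k n : ℕ} {s : Fin k → ℕ} (hs : ∑ i, s i = n) (i : Fin k) : s i ≤ n :=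
  hs ▸ single_le_sum (fun j _ => Nat.zero_le (s j)) (mem_univ i)

lemma card_antidiagonalTuple_le (k n : ℕ) : #(Nat.antidiagonalTuple k n) ≤ (n + 1) ^ k := calc
  #(Nat.antidiagonalTuple k n) ≤ #(Fintype.piFinset fun _ : Fin k => range (n + 1)) := by
    refine card_le_card fun s hs => Fintype.mem_piFinset.2 fun i => mem_range.2 ?_
    exact Nat.lt_succ_of_le (apply_le_of_sum_eq (Nat.mem_antidiagonalTuple.1 hs) i)
  _ = (n + 1) ^ k := by simp

lemma sum_succ_mul_add_sum_le {n : ℕ} (s : Fin (n + 1) → ℕ) :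
    ∑ i : Fin (n + 1), ((i : ℕ) + 1) * s i + ∑ i, s i ≤ (n + 1) * ∑ i, s i + s (Fin.last n) := by
  rw [← sum_add_distrib, mul_sum, ← Fintype.sum_ite_eq' (Fin.last n) s, ← sum_add_distrib]
  refine sum_le_sum fun i _ => ?_
  by_cases hi : i = Fin.last n
  · subst hi; simp
  · have : (i : ℕ) < n := Fin.val_lt_last hi
    rw [if_neg hi]
    nlinarith

section CanonicalWeights

variable {m p q : ℝ}

lemma asipWeight_eq_prod_mul_pow {N : ℕ} (s : Fin N → ℕ) :
    asipWeight m p q s = (∏ i, asipW m (s i)) * (p / q) ^ ∑ i : Fin N, ((i : ℕ) + 1) * s i := by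
  rw [asipWeight, prod_mul_distrib, ← prod_pow_eq_pow_sum]
  simp only [asipLam, ← pow_mul]

lemma asipWeight_nonneg (hm : 0 < m) (hr : 0 ≤ p / q) {N : ℕ} (s : Fin N → ℕ) :
    0 ≤ asipWeight m p q s := by
  rw [asipWeight_eq_prod_mul_pow]
  exact mul_nonneg (prod_nonneg fun i _ => (asipW_pos hm _).le) (pow_nonneg hr _)

lemma asipWeight_single_last (hm : 0 < m) (n K : ℕ) :
    asipWeight m p q (Pi.single (Fin.last n) K) = asipW m K * (p / q) ^ ((n + 1) * K) := by
  rw [asipWeight_eq_prod_mul_pow]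
  congr 1
  · rw [Fintype.prod_eq_single (Fin.last n) fun i hi => by simp [hi, asipW_zero hm]]
    simp
  · rw [Fintype.sum_eq_single (Fin.last n) fun i hi => by simp [hi]]
    simp

lemma asipZ_eq_sum (N K : ℕ) :
    asipZ m p q N K = ∑ s ∈ Nat.antidiagonalTuple N K, asipWeight m p q s := by
  rw [asipZ, ← Finset.tsum_subtype]
  exact (Equiv.subtypeEquivRight fun s => Nat.mem_antidiagonalTuple.symm).tsum_eq
    (fun s => asipWeight m p q s.1)

lemma prod_asipW_le (hm : 0 < m) {N K : ℕ} {s : Fin N → ℕ} (hs : ∑ i, s i = K) :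
    ∏ i, asipW m (s i) ≤ ((K : ℝ) + 1) ^ (⌈m / 2⌉₊ * N) := calc
  ∏ i, asipW m (s i) ≤ ∏ _i : Fin N, ((K : ℝ) + 1) ^ ⌈m / 2⌉₊ := by
    refine prod_le_prod (fun i _ => (asipW_pos hm _).le) fun i _ => (asipW_le_pow hm _).trans ?_
    gcongr
    exact apply_le_of_sum_eq hs i
  _ = ((K : ℝ) + 1) ^ (⌈m / 2⌉₊ * N) := by simp [pow_mul]

lemma le_asipZ (hm : 0 < m) (hr : 0 ≤ p / q) (n K : ℕ) :
    min (m / 2) 1 / (K + 1) * (p / q) ^ ((n + 1) * K) ≤ asipZ m p q (n + 1) K := calc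
  min (m / 2) 1 / (K + 1) * (p / q) ^ ((n + 1) * K)
      ≤ asipWeight m p q (Pi.single (Fin.last n) K) := by
    rw [asipWeight_single_last hm]
    exact mul_le_mul_of_nonneg_right (min_div_le_asipW hm K) (pow_nonneg hr _)
  _ ≤ asipZ m p q (n + 1) K := by
    rw [asipZ_eq_sum]
    refine single_le_sum (fun s _ => asipWeight_nonneg hm hr s) ?_
    simp [Nat.mem_antidiagonalTuple]

lemma asipWeight_div_asipZ_le (hm : 0 < m) (hr : 1 ≤ p / q) {n K : ℕ} (s : Fin (n + 1) → ℕ)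
    (hs : ∑ i, s i = K) :
    asipWeight m p q s / asipZ m p q (n + 1) K ≤
      (K + 1) ^ (⌈m / 2⌉₊ * (n + 1) + 1) / min (m / 2) 1 / (p / q) ^ (K - s (Fin.last n)) := by
  set r := p / q
  set c₀ := min (m / 2) 1
  set e := ∑ i : Fin (n + 1), ((i : ℕ) + 1) * s i
  set d := K - s (Fin.last n)
  have hc₀ : 0 < c₀ := lt_min (half_pos hm) one_pos
  have hr0 : 0 < r := by linarith
  have hexp : e + d ≤ (n + 1) * K := by
    have := sum_succ_mul_add_sum_le s
    rw [hs] at this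
    have := apply_le_of_sum_eq hs (Fin.last n)
    omega
  calc asipWeight m p q s / asipZ m p q (n + 1) K
      ≤ ((K + 1) ^ (⌈m / 2⌉₊ * (n + 1)) * r ^ e) / (c₀ / (K + 1) * r ^ ((n + 1) * K)) := by
        refine div_le_div₀ (by positivity) ?_ (by positivity) (le_asipZ hm hr0.le n K)
        rw [asipWeight_eq_prod_mul_pow]
        exact mul_le_mul_of_nonneg_right (prod_asipW_le hm hs) (pow_nonneg hr0.le _)
    _ ≤ ((K + 1) ^ (⌈m / 2⌉₊ * (n + 1)) * r ^ e) / (c₀ / (K + 1) * (r ^ e * r ^ d)) := by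
        rw [← pow_add]
        gcongr
    _ = (K + 1) ^ (⌈m / 2⌉₊ * (n + 1) + 1) / c₀ / r ^ d := by
        field_simp
        ring

end CanonicalWeights

section CountableLaws

variable {Ω α : Type*} [MeasurableSpace Ω] {P : Measure Ω} {X : Ω → α}

lemma ae_mem_of_measure_eq_zero_of_notMem [Countable α] {S : Set α}
    (h : ∀ s ∉ S, P {ω | X ω = s} = 0) : ∀ᵐ ω ∂P, X ω ∈ S := by
  have hcover : {ω | X ω ∉ S} = ⋃ s ∈ Sᶜ, {ω | X ω = s} := by ext; simp
  rw [ae_iff, hcover, measure_biUnion_null_iff Sᶜ.to_countable]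
  exact h

lemma measure_preimage_le_sum_of_ae_mem {A : Finset α} (hA : ∀ᵐ ω ∂P, X ω ∈ A) (T : Set α)
    [DecidablePred (· ∈ T)] : P {ω | X ω ∈ T} ≤ ∑ s ∈ A with s ∈ T, P {ω | X ω = s} := calc
  P {ω | X ω ∈ T} ≤ P (⋃ s ∈ A.filter (· ∈ T), {ω | X ω = s}) := by
    refine measure_mono_ae (hA.mono fun ω hω hT => ?_)
    exact Set.mem_biUnion (mem_filter.2 ⟨hω, hT⟩) rfl
  _ ≤ ∑ s ∈ A with s ∈ T, P {ω | X ω = s} := measure_biUnion_finset_le _ _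

end CountableLaws

lemma ae_tendsto_of_forall_tsum_measure_ne_top {Ω E : Type*} [MeasurableSpace Ω]
    [PseudoMetricSpace E] {P : Measure Ω} {Y : ℕ → Ω → E} {c : E}
    (h : ∀ ε > 0, ∑' K, P {ω | ε ≤ dist (Y K ω) c} ≠ ⊤) :
    ∀ᵐ ω ∂P, Tendsto (Y · ω) atTop (𝓝 c) := by
  have hscale : ∀ j : ℕ, ∀ᵐ ω ∂P, ∀ᶠ K in atTop, dist (Y K ω) c < 1 / (j + 1) := fun j =>
    (ae_eventually_notMem (h _ Nat.one_div_pos_of_nat)).mono fun ω hω =>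
      hω.mono fun K hK => not_le.1 hK
  filter_upwards [ae_all_iff.2 hscale] with ω hω
  refine Metric.tendsto_nhds.2 fun ε hε => ?_
  obtain ⟨j, hj⟩ := exists_nat_one_div_lt hε
  exact (hω j).mono fun K hK => hK.trans hj

lemma dist_div_one_mul_eq_sub {a K : ℕ} (h : a ≤ K) : dist ((a : ℝ) / K) 1 * K = (K - a : ℕ) := by
  rcases K.eq_zero_or_pos with rfl | hK
  · simp
  · have hK' : (0 : ℝ) < K := Nat.cast_pos.2 hK
    have ha : (a : ℝ) ≤ K := Nat.cast_le.2 h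
    rw [Real.dist_eq, abs_sub_comm, abs_of_nonneg (by rw [sub_nonneg, div_le_one hK']; exact ha),
      Nat.cast_sub h]
    field_simp

lemma inv_pow_le_rpow_neg_pow {r ε : ℝ} (hr : 1 ≤ r) {d K : ℕ} (h : ε * K ≤ d) :
    (r ^ d)⁻¹ ≤ (r ^ (-ε)) ^ K := by
  rw [← Real.rpow_natCast, ← Real.rpow_neg (by linarith), ← Real.rpow_mul_natCast (by linarith)]
  exact Real.rpow_le_rpow_of_exponent_le hr (by linarith)

lemma summable_mul_add_one_pow_mul_geometric (C : ℝ) (b : ℕ) {θ : ℝ} (h0 : 0 < θ) (h1 : θ < 1) :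
    Summable fun K : ℕ => C * ((K : ℝ) + 1) ^ b * θ ^ K := by
  have hpoly : Summable fun K : ℕ => ((K : ℝ) + 1) ^ b * θ ^ (K + 1) := by
    have := summable_pow_mul_geometric_of_norm_lt_one b (by rwa [Real.norm_of_nonneg h0.le])
    exact_mod_cast (summable_nat_add_iff 1).2 this
  refine (hpoly.mul_left (C * θ⁻¹)).congr fun K => ?_
  rw [pow_succ]
  field_simp

/-- The canonical law `μ^K`, extended by zero outside `A_K`. -/
noncomputable def asipProb (m p q : ℝ) (N K : ℕ) (s : Fin N → ℕ) : ℝ :=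
  if ∑ i, s i = K then asipWeight m p q s / asipZ m p q N K else 0

section Tail

variable {m p q : ℝ} {n : ℕ} {Ω : Type*} [MeasurableSpace Ω] {P : Measure Ω}
  {η : ℕ → Ω → (Fin (n + 1) → ℕ)}

lemma ae_mem_antidiagonalTuple_of_law
    (hlaw : ∀ K s, P {ω | η K ω = s} = ENNReal.ofReal (asipProb m p q (n + 1) K s))
    (K : ℕ) : ∀ᵐ ω ∂P, η K ω ∈ Nat.antidiagonalTuple (n + 1) K :=
  ae_mem_of_measure_eq_zero_of_notMem fun s hs => by
    rw [hlaw, asipProb, if_neg (by simpa [Nat.mem_antidiagonalTuple] using hs),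
      ENNReal.ofReal_zero]

lemma exists_measure_dist_last_div_ge_le (hm : 0 < m) (hr : 1 ≤ p / q)
    (hlaw : ∀ K s, P {ω | η K ω = s} = ENNReal.ofReal (asipProb m p q (n + 1) K s))
    (ε : ℝ) : ∃ C : ℝ, 0 ≤ C ∧ ∃ b : ℕ, ∀ K : ℕ,
      P {ω | ε ≤ dist ((η K ω (Fin.last n) : ℝ) / K) 1} ≤
        ENNReal.ofReal (C * ((K : ℝ) + 1) ^ b * ((p / q) ^ (-ε)) ^ K) := by
  classical
  set a := ⌈m / 2⌉₊ * (n + 1) + 1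
  set c₀ := min (m / 2) 1
  refine ⟨c₀⁻¹, by positivity, a + (n + 1), fun K => ?_⟩
  set A := Nat.antidiagonalTuple (n + 1) K
  set T := {s : Fin (n + 1) → ℕ | ε ≤ dist ((s (Fin.last n) : ℝ) / K) 1}
  set bound := (K + 1) ^ a / c₀ * ((p / q) ^ (-ε)) ^ K
  have hterm : ∀ s ∈ A.filter (· ∈ T), P {ω | η K ω = s} ≤ ENNReal.ofReal bound := by
    intro s hs
    obtain ⟨hsA, hsT⟩ := mem_filter.1 hs
    rw [Nat.mem_antidiagonalTuple] at hsA
    have hdeficit : ε * K ≤ (K - s (Fin.last n) : ℕ) := by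
      rw [← dist_div_one_mul_eq_sub (apply_le_of_sum_eq hsA _)]
      exact mul_le_mul_of_nonneg_right hsT K.cast_nonneg
    rw [hlaw, asipProb, if_pos hsA]
    refine ENNReal.ofReal_le_ofReal ((asipWeight_div_asipZ_le hm hr s hsA).trans ?_)
    rw [div_eq_mul_inv _ (_ ^ _)]
    exact mul_le_mul_of_nonneg_left (inv_pow_le_rpow_neg_pow hr hdeficit) (by positivity)
  calc P {ω | ε ≤ dist ((η K ω (Fin.last n) : ℝ) / K) 1}
      ≤ ∑ s ∈ A with s ∈ T, P {ω | η K ω = s} :=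
        measure_preimage_le_sum_of_ae_mem (ae_mem_antidiagonalTuple_of_law hlaw K) T
    _ ≤ ∑ s ∈ A, ENNReal.ofReal bound :=
        (sum_le_sum hterm).trans (sum_le_sum_of_subset (filter_subset _ _))
    _ = #A * ENNReal.ofReal bound := by rw [sum_const, nsmul_eq_mul]
    _ ≤ ((K + 1) ^ (n + 1) : ℕ) * ENNReal.ofReal bound := by
        gcongr
        exact card_antidiagonalTuple_le _ _
    _ = ENNReal.ofReal (c₀⁻¹ * ((K : ℝ) + 1) ^ (a + (n + 1)) * ((p / q) ^ (-ε)) ^ K) := by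
        rw [← ENNReal.ofReal_natCast, ← ENNReal.ofReal_mul (by positivity)]
        congr 1
        push_cast
        ring

end Tail

theorem asip_condensation_slln
    (m p q : ℝ) (hm : 0 < m) (hq : 0 < q) (hpq : q < p)
    (N : ℕ) (hN : 2 ≤ N)
    {Ω : Type*} [MeasurableSpace Ω] (P : Measure Ω)
    (η : ℕ → Ω → (Fin N → ℕ))
    (hlaw : ∀ K : ℕ, ∀ s : Fin N → ℕ,
      P {ω | η K ω = s} =
        ENNReal.ofReal
          (if ∑ i, s i = K then asipWeight m p q s / asipZ m p q N K else 0)) :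
    ∀ᵐ ω ∂P,
      Tendsto (fun K : ℕ => ((η K ω ⟨N - 1, by omega⟩ : ℕ) : ℝ) / K) atTop (𝓝 1) := by
  obtain ⟨n, rfl⟩ : ∃ n, N = n + 1 := ⟨N - 1, by omega⟩
  have hr : 1 < p / q := (one_lt_div hq).2 hpq
  have hlast : (⟨n + 1 - 1, by omega⟩ : Fin (n + 1)) = Fin.last n := Fin.ext (by simp)
  rw [hlast]
  refine ae_tendsto_of_forall_tsum_measure_ne_top fun ε hε => ?_
  obtain ⟨C, hC, b, htail⟩ := exists_measure_dist_last_div_ge_le hm hr.le hlaw ε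
  have hθ0 : 0 < (p / q) ^ (-ε) := Real.rpow_pos_of_pos (by linarith) _
  have hθ1 : (p / q) ^ (-ε) < 1 := Real.rpow_lt_one_of_one_lt_of_neg hr (neg_neg_of_pos hε)
  refine ne_top_of_le_ne_top ?_ (ENNReal.tsum_le_tsum htail)
  rw [← ENNReal.ofReal_tsum_of_nonneg (fun K => by positivity)
    (summable_mul_add_one_pow_mul_geometric C b hθ0 hθ1)]
  exact ENNReal.ofReal_ne_top
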